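/- Let f : ℝ³ → ℝ be a C¹ function and let Π : ℝ → ℝ³ be differentiable and satisfy Π'(t) = −Π(t) × ∇f(Π(t)) − Π(t) × (Π(t) × ∇f(Π(t))) for all t. Then the Hamiltonian H(Π) = ‖Π‖²/2 is conserved, i.e., ‖Π(t)‖ is constant in t, and the entropy f is produced, i.e., t ↦ f(Π(t)) is nondecreasing, with d/dt f(Π(t)) = ‖Π(t) × ∇f(Π(t))‖² ≥ 0. -/

import Mathlib

/-! The Hamiltonian part `-Π × ∇f` and the double-bracket part `-Π × (Π × ∇f)` are both orthogonal
to `Π`, so `‖Π‖²` is constant along the flow. Along `∇f` the Hamiltonian part vanishes, while the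
double-bracket part contributes `‖Π × ∇f‖²` by the cyclic symmetry of the triple product; hence
`f` increases. -/

open Matrix

/-- The Euclidean gradient of `f : ℝ³ → ℝ`. -/
noncomputable def euclGrad (f : (Fin 3 → ℝ) → ℝ) (x : Fin 3 → ℝ) : Fin 3 → ℝ :=
  fun i => fderiv ℝ f x (Pi.single i 1)

theorem fderiv_apply_eq_euclGrad_dotProduct (f : (Fin 3 → ℝ) → ℝ) (x v : Fin 3 → ℝ) :
    fderiv ℝ f x v = euclGrad f x ⬝ᵥ v := by
  conv_lhs => rw [← Finset.univ_sum_single v, map_sum]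
  simp only [dotProduct, euclGrad, mul_comm]
  refine Finset.sum_congr rfl fun i _ => ?_
  rw [← smul_eq_mul, ← map_smul, ← Pi.single_smul', smul_eq_mul, mul_one]

theorem DifferentiableAt.hasDerivAt_comp_euclGrad {f : (Fin 3 → ℝ) → ℝ} {P : ℝ → Fin 3 → ℝ}
    {P' : Fin 3 → ℝ} {t : ℝ} (hf : DifferentiableAt ℝ f (P t)) (hP : HasDerivAt P P' t) :
    HasDerivAt (fun s => f (P s)) (euclGrad f (P t) ⬝ᵥ P') t := by
  rw [← fderiv_apply_eq_euclGrad_dotProduct]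
  exact hf.hasFDerivAt.comp_hasDerivAt t hP

theorem HasDerivAt.dotProduct {n : Type*} [Fintype n] {u v : ℝ → n → ℝ} {u' v' : n → ℝ} {t : ℝ}
    (hu : HasDerivAt u u' t) (hv : HasDerivAt v v' t) :
    HasDerivAt (fun s => u s ⬝ᵥ v s) (u' ⬝ᵥ v t + u t ⬝ᵥ v') t := by
  have := HasDerivAt.fun_sum (u := Finset.univ) fun i _ =>
    (hasDerivAt_pi.1 hu i).fun_mul (hasDerivAt_pi.1 hv i)
  rw [Finset.sum_add_distrib] at this
  exact this

section CrossProduct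

variable {R : Type*} [CommRing R]

theorem self_dotProduct_metriplectic_eq_zero (p g : Fin 3 → R) :
    p ⬝ᵥ (-(p ⨯₃ g) - p ⨯₃ (p ⨯₃ g)) = 0 := by
  simp only [dotProduct_sub, dotProduct_neg, dot_self_cross, neg_zero, sub_zero]

theorem dotProduct_metriplectic_eq_cross_dotProduct_self (p g : Fin 3 → R) :
    g ⬝ᵥ (-(p ⨯₃ g) - p ⨯₃ (p ⨯₃ g)) = (p ⨯₃ g) ⬝ᵥ (p ⨯₃ g) := by
  rw [dotProduct_sub, dotProduct_neg, dot_cross_self, triple_product_permutation,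
    triple_product_permutation, ← cross_anticomm, dotProduct_neg, neg_zero, zero_sub]

end CrossProduct

/-- For the metriplectic rigid-body system
`Π' = −Π × ∇f(Π) − Π × (Π × ∇f(Π))` with `f` of class `C¹`, the Hamiltonian
`H(Π) = ‖Π‖²/2` is conserved (i.e. `Π(t)·Π(t)` is constant) and the entropy `f`
is produced: `d/dt f(Π(t)) = ‖Π × ∇f(Π)‖² ≥ 0`, so `t ↦ f(Π(t))` is
nondecreasing. -/
theorem stmt_11 (f : (Fin 3 → ℝ) → ℝ) (hf : ContDiff ℝ 1 f)
    (P : ℝ → Fin 3 → ℝ)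
    (hP : ∀ t, HasDerivAt P
      (-crossProduct (P t) (euclGrad f (P t)) -
        crossProduct (P t) (crossProduct (P t) (euclGrad f (P t)))) t) :
    (∀ t, P t ⬝ᵥ P t = P 0 ⬝ᵥ P 0) ∧
    (∀ t, HasDerivAt (fun s => f (P s))
        (crossProduct (P t) (euclGrad f (P t)) ⬝ᵥ
          crossProduct (P t) (euclGrad f (P t))) t ∧
      0 ≤ crossProduct (P t) (euclGrad f (P t)) ⬝ᵥ
          crossProduct (P t) (euclGrad f (P t))) ∧
    Monotone fun t => f (P t) := by
  have hnorm (t : ℝ) : HasDerivAt (fun s => P s ⬝ᵥ P s) 0 t := by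
    simpa only [dotProduct_comm _ (P t), self_dotProduct_metriplectic_eq_zero, add_zero]
      using (hP t).dotProduct (hP t)
  have hentropy (t : ℝ) : HasDerivAt (fun s => f (P s))
      (crossProduct (P t) (euclGrad f (P t)) ⬝ᵥ crossProduct (P t) (euclGrad f (P t))) t := by
    simpa only [dotProduct_metriplectic_eq_cross_dotProduct_self]
      using (hf.differentiable one_ne_zero (P t)).hasDerivAt_comp_euclGrad (hP t)
  have hnonneg (t : ℝ) : 0 ≤ crossProduct (P t) (euclGrad f (P t)) ⬝ᵥ
      crossProduct (P t) (euclGrad f (P t)) :=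
    dotProduct_self_star_nonneg _
  refine ⟨fun t => ?_, fun t => ⟨hentropy t, hnonneg t⟩, ?_⟩
  · exact is_const_of_deriv_eq_zero (fun s => (hnorm s).differentiableAt)
      (fun s => (hnorm s).deriv) t 0
  · exact monotone_of_deriv_nonneg (fun t => (hentropy t).differentiableAt)
      (fun t => (hentropy t).deriv ▸ hnonneg t)
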